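/- arXiv:1703.05839 — 4 statements merged into one kernel-verified Lean document; each statement's English description precedes it below -/
import Mathlib

section
/- (Anti-concentration for non-flat vectors, Lemma 3.3.) Let 1 ≤ m ≤ n, ρ ∈ (0,1), and let u ∈ ℂⁿ be a unit vector with u ∉ Flat(m,ρ). Then Q_u(ρ) < 1 − m/n. -/
open scoped BigOperators

noncomputable section

/-- The coordinates of a vector in `EuclideanSpace ℂ (Fin n)`. -/
def coords {n : ℕ} (v : EuclideanSpace ℂ (Fin n)) : Fin n → ℂ :=
  WithLp.equiv 2 (Fin n → ℂ) v

/-- `Sparse(m)`: vectors in `ℂⁿ` with at most `m` nonzero coordinates. -/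
def sparseVecs (n m : ℕ) : Set (EuclideanSpace ℂ (Fin n)) :=
  {v | ({j | coords v j ≠ 0} : Set (Fin n)).ncard ≤ m}

/-- The all-ones vector `𝟙 ∈ ℂⁿ`. -/
def onesE (n : ℕ) : EuclideanSpace ℂ (Fin n) :=
  (WithLp.equiv 2 (Fin n → ℂ)).symm (fun _ => 1)

/-- `Flat(m, ρ)`: unit vectors within distance `ρ` of `Sparse(m) + ℂ·𝟙`. -/
def flatVecs (n m : ℕ) (ρ : ℝ) : Set (EuclideanSpace ℂ (Fin n)) :=
  {u | ‖u‖ = 1 ∧ ∃ v ∈ sparseVecs n m, ∃ lam : ℂ, ‖u - v - lam • onesE n‖ ≤ ρ}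

/-- The concentration function
`Q_v(ρ) = sup_{λ ∈ ℂ} (1/n) #{j : |v_j - λ/√n| < ρ/√n}`. -/
def concFn {n : ℕ} (v : EuclideanSpace ℂ (Fin n)) (ρ : ℝ) : ℝ :=
  ⨆ lam : ℂ,
    (({j | ‖coords v j - lam / (Real.sqrt n : ℂ)‖ < ρ / Real.sqrt n} :
        Set (Fin n)).ncard : ℝ) / n

/-! If `u` is not flat, then for every centre `c` fewer than `n - m` coordinates lie within
`ρ/√n` of `c`: otherwise subtracting `c𝟙` and zeroing the at most `m` far coordinates leaves a
vector whose coordinates are all smaller than `ρ/√n`, hence of norm at most `ρ`, exhibiting `u`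
as flat. Every level set in `Q_u(ρ)` therefore has at most `n - m - 1` elements. -/

lemma EuclideanSpace.norm_le_sqrt_card_mul {𝕜 ι : Type*} [RCLike 𝕜] [Fintype ι]
    (x : EuclideanSpace 𝕜 ι) {r : ℝ} (hr : 0 ≤ r) (hx : ∀ i, ‖x i‖ ≤ r) :
    ‖x‖ ≤ √(Fintype.card ι) * r := by
  calc ‖x‖ = √(∑ i, ‖x i‖ ^ 2) := EuclideanSpace.norm_eq x
    _ ≤ √(∑ _ : ι, r ^ 2) := by gcongr with i; exact hx i
    _ = √(Fintype.card ι) * r := by simp [Real.sqrt_mul, Real.sqrt_sq hr]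

lemma mem_flatVecs_of_ncard_compl_le {n m : ℕ} {ρ : ℝ} (hρ : 0 ≤ ρ)
    {u : EuclideanSpace ℂ (Fin n)} (hu : ‖u‖ = 1) (c : ℂ)
    (hS : {j | ‖coords u j - c‖ < ρ / √n}ᶜ.ncard ≤ m) : u ∈ flatVecs n m ρ := by
  set S : Set (Fin n) := {j | ‖coords u j - c‖ < ρ / √n}
  set f : Fin n → ℂ := fun j => coords u j - c
  set v : EuclideanSpace ℂ (Fin n) := WithLp.toLp 2 (Sᶜ.indicator f)
  have hw : ∀ j, (u - v - c • onesE n) j = S.indicator f j := by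
    intro j
    by_cases hj : j ∈ S <;> simp [hj, v, f, onesE, coords]
  have hw_le : ∀ j, ‖(u - v - c • onesE n) j‖ ≤ ρ / √n := by
    intro j
    rw [hw]
    by_cases hj : j ∈ S
    · simpa [hj] using hj.le
    · simp only [hj, not_false_eq_true, Set.indicator_of_notMem, norm_zero]
      positivity
  refine ⟨hu, v, (Set.ncard_le_ncard Set.support_indicator_subset).trans hS, c, ?_⟩
  calc ‖u - v - c • onesE n‖ ≤ √(Fintype.card (Fin n)) * (ρ / √n) :=
        EuclideanSpace.norm_le_sqrt_card_mul _ (by positivity) hw_le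
    _ ≤ ρ := by
        rw [Fintype.card_fin]
        rcases (Real.sqrt_nonneg n).eq_or_lt with h | h
        · simp [← h, hρ]
        · rw [mul_div_cancel₀ _ h.ne']

lemma ncard_add_lt_of_notMem_flatVecs {n m : ℕ} {ρ : ℝ} (hρ : 0 ≤ ρ)
    {u : EuclideanSpace ℂ (Fin n)} (hu : ‖u‖ = 1) (hflat : u ∉ flatVecs n m ρ) (c : ℂ) :
    {j | ‖coords u j - c‖ < ρ / √n}.ncard + m < n := by
  by_contra! h
  refine hflat (mem_flatVecs_of_ncard_compl_le hρ hu c ?_)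
  have := Set.ncard_add_ncard_compl {j | ‖coords u j - c‖ < ρ / √n}
  rw [Nat.card_fin] at this
  omega

theorem nonflat_anticoncentration_general (n m : ℕ)
    (ρ : ℝ) (hρ : ρ ∈ Set.Ioo (0 : ℝ) 1)
    (u : EuclideanSpace ℂ (Fin n)) (hu : ‖u‖ = 1) (hflat : u ∉ flatVecs n m ρ) :
    concFn u ρ < 1 - (m : ℝ) / n := by
  have hcount := ncard_add_lt_of_notMem_flatVecs hρ.1.le hu hflat
  have hn : (0 : ℝ) < n := by exact_mod_cast (hcount 0).pos
  calc concFn u ρ ≤ 1 - (m + 1 : ℝ) / n := ciSup_le fun lam => by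
        rw [le_sub_iff_add_le, ← add_div, div_le_one hn]
        exact_mod_cast hcount _
    _ < 1 - m / n := by gcongr; linarith

/-- **Anti-concentration for non-flat vectors** (Lemma 3.3): if `u` is a unit vector with
`u ∉ Flat(m, ρ)`, then `Q_u(ρ) < 1 - m/n`. -/
theorem nonflat_anticoncentration (n m : ℕ) (hm1 : 1 ≤ m) (hmn : m ≤ n)
    (ρ : ℝ) (hρ : ρ ∈ Set.Ioo (0 : ℝ) 1)
    (u : EuclideanSpace ℂ (Fin n)) (hu : ‖u‖ = 1) (hflat : u ∉ flatVecs n m ρ) :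
    concFn u ρ < 1 - (m : ℝ) / n :=
  nonflat_anticoncentration_general n m ρ hρ u hu hflat

end
end

section
/- (Existence of a large bimodal component, Lemma 3.4.) There is an absolute constant c > 0 such that: for every unit vector u ∈ ℂⁿ with u ∉ Flat(m,ρ), there exist disjoint sets J₁, J₂ ⊆ [n] with |J₁| ≥ m and |J₂| ≥ c(n−m) such that |u_{j₁} − u_{j₂}| ≥ ρ/(2√n) for all j₁ ∈ J₁, j₂ ∈ J₂. Moreover, there is a set J₁′ ⊆ J₁ with |J₁′| ≥ cm such that for every integer 1 ≤ r ≤ min(|J₁′|, |J₂|) and all subsets J₁″ ⊆ J₁′ and J₂″ ⊆ J₂ of size r, |(1/r)Σ_{j∈J₁″} u_j − (1/r)Σ_{j∈J₂″} u_j| ≥ ρ/(4√n). -/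
/-
As `u ∉ Flat(m, ρ)`, every disc of radius `ρ/√n` misses more than `m` coordinates
of `u`: otherwise zeroing the coordinates inside the disc would put `u` within `ρ` of
`Sparse(m) + ℂ𝟙`. With `δ = ρ/(2√n)`, take the least `k` such that some disc of radius `kδ/2`
centred at a coordinate holds `(n - m)/676` coordinates; it gives `J₂`. The concentric disc of
radius `(k + 1)δ` misses at least `m` coordinates (`J₁`): for `k ≤ 1` by the first remark, and for
`k ≥ 2` because it is covered by `26²` grid cells, each inside a disc of radius `(k - 1)δ/2`, which
holds fewer than `(n - m)/676` coordinates by minimality of `k`. Finally a quarter of `J₁` lies in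
one of the sectors `{w : |w - z| ≤ 2 Re(ē (w - z))}`, `e ∈ {±1, ±i}`, around the centre `z`; on it
the functional `Re(ē ·)` exceeds its values on `J₂` by `δ/2`, and averages inherit this.
-/

open scoped BigOperators

noncomputable section

open Finset Complex ComplexConjugate

lemma exists_pow_I_half_norm_le_re (w : ℂ) : ∃ k < 4, ‖w‖ / 2 ≤ (conj (I ^ k) * w).re := by
  have hw := norm_le_abs_re_add_abs_im w
  rcases le_total |w.im| |w.re| with h | h
  · rcases abs_cases w.re with ⟨hre, -⟩ | ⟨hre, -⟩
    · exact ⟨0, by norm_num, by linarith [show (conj (I ^ 0) * w).re = w.re by simp]⟩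
    · exact ⟨2, by norm_num, by linarith [show (conj (I ^ 2) * w).re = -w.re by simp]⟩
  · rcases abs_cases w.im with ⟨him, -⟩ | ⟨him, -⟩
    · exact ⟨1, by norm_num, by linarith [show (conj (I ^ 1) * w).re = w.im by simp]⟩
    · exact ⟨3, by norm_num, by linarith [show (conj (I ^ 3) * w).re = -w.im by simp [pow_succ]]⟩

lemma exists_norm_eq_one_card_le_card_sector {ι : Type*} (y : ι → ℂ) (S : Finset ι) :
    ∃ e : ℂ, ‖e‖ = 1 ∧ (#S : ℝ) / 4 ≤ #{i ∈ S | ‖y i‖ / 2 ≤ (conj e * y i).re} := by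
  choose k hk using fun i => exists_pow_I_half_norm_le_re (y i)
  obtain ⟨k₀, -, hk₀⟩ := exists_le_card_fiber_of_nsmul_le_card_of_maps_to (s := S)
    (t := range 4) (f := k) (b := (#S : ℝ) / 4) (fun i _ => mem_range.mpr (hk i).1)
    (nonempty_range_iff.mpr (by norm_num)) (by simp [mul_div_cancel₀])
  refine ⟨I ^ k₀, by simp, hk₀.trans ?_⟩
  exact_mod_cast card_le_card fun i hi => by
    simp only [mem_filter] at hi ⊢
    exact ⟨hi.1, hi.2 ▸ (hk i).2⟩

lemma re_conj_mul_avg {ι : Type*} (y : ι → ℂ) (e : ℂ) (A : Finset ι) :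
    (conj e * ((#A : ℂ)⁻¹ * ∑ i ∈ A, y i)).re = (#A : ℝ)⁻¹ * ∑ i ∈ A, (conj e * y i).re := by
  rw [mul_left_comm, mul_sum, ← ofReal_natCast, ← ofReal_inv, re_ofReal_mul, re_sum]

lemma sub_le_norm_avg_sub_avg {ι : Type*} (y : ι → ℂ) {e : ℂ} (he : ‖e‖ = 1)
    {A B : Finset ι} {r : ℕ} (hr : 0 < r) (hA : #A = r) (hB : #B = r) {a b : ℝ}
    (ha : ∀ i ∈ A, a ≤ (conj e * y i).re) (hb : ∀ i ∈ B, (conj e * y i).re ≤ b) :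
    a - b ≤ ‖(r : ℂ)⁻¹ * ∑ i ∈ A, y i - (r : ℂ)⁻¹ * ∑ i ∈ B, y i‖ := by
  have hr' : (0 : ℝ) < r := by exact_mod_cast hr
  have hsumA : r * a ≤ ∑ i ∈ A, (conj e * y i).re := by
    simpa [hA] using card_nsmul_le_sum A _ a ha
  have hsumB : ∑ i ∈ B, (conj e * y i).re ≤ r * b := by
    simpa [hB] using sum_le_card_nsmul B _ b hb
  calc a - b ≤ (r : ℝ)⁻¹ * ∑ i ∈ A, (conj e * y i).re - (r : ℝ)⁻¹ * ∑ i ∈ B, (conj e * y i).re := by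
        rw [← mul_sub, le_inv_mul_iff₀ hr']; linarith
    _ = (conj e * ((r : ℂ)⁻¹ * ∑ i ∈ A, y i - (r : ℂ)⁻¹ * ∑ i ∈ B, y i)).re := by
        rw [mul_sub, sub_re, ← hA, re_conj_mul_avg, hA, ← hB, re_conj_mul_avg, hB]
    _ ≤ ‖(r : ℂ)⁻¹ * ∑ i ∈ A, y i - (r : ℂ)⁻¹ * ∑ i ∈ B, y i‖ :=
        (re_le_norm _).trans_eq (by rw [norm_mul, norm_conj, he, one_mul])

lemma half_le_norm_avg_sub_avg_of_sector {ι : Type*} (x : ι → ℂ) (z : ℂ) {e : ℂ} (he : ‖e‖ = 1)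
    {a δ : ℝ} {A B : Finset ι} {r : ℕ} (hr : 0 < r) (hA : #A = r) (hB : #B = r)
    (hAfar : ∀ i ∈ A, 2 * a + δ < ‖x i - z‖ ∧ ‖x i - z‖ / 2 ≤ (conj e * (x i - z)).re)
    (hBnear : ∀ i ∈ B, ‖x i - z‖ ≤ a) :
    δ / 2 ≤ ‖(r : ℂ)⁻¹ * ∑ i ∈ A, x i - (r : ℂ)⁻¹ * ∑ i ∈ B, x i‖ := by
  have hshift : ∀ w, (conj e * w).re = (conj e * z).re + (conj e * (w - z)).re := fun w => by
    simp only [mul_sub, sub_re]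
    ring
  have hsep := sub_le_norm_avg_sub_avg x he hr hA hB
    (a := (conj e * z).re + (2 * a + δ) / 2) (b := (conj e * z).re + a)
    (fun i hi => by rw [hshift (x i)]; linarith [hAfar i hi])
    (fun i hi => by
      rw [hshift (x i)]
      have := (re_le_norm (conj e * (x i - z))).trans_eq (by rw [norm_mul, norm_conj, he, one_mul])
      linarith [hBnear i hi])
  linarith

lemma card_Icc_floor_div_le (c : ℝ) {R t : ℝ} (hR : 0 ≤ R) (ht : 0 < t) :
    (#(Icc ⌊(c - R) / t⌋ ⌊(c + R) / t⌋) : ℝ) ≤ 2 * R / t + 2 := by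
  have hfloor : ⌊(c - R) / t⌋ ≤ ⌊(c + R) / t⌋ :=
    Int.floor_mono (div_le_div_of_nonneg_right (by linarith) ht.le)
  have hcard : (#(Icc ⌊(c - R) / t⌋ ⌊(c + R) / t⌋) : ℝ) = ⌊(c + R) / t⌋ + 1 - ⌊(c - R) / t⌋ := by
    rw [Int.card_Icc]
    exact_mod_cast Int.toNat_of_nonneg (by omega)
  have hwidth : (c + R) / t - (c - R) / t = 2 * R / t := by ring
  rw [hcard]
  linarith [Int.floor_le ((c + R) / t), Int.sub_one_lt_floor ((c - R) / t)]

lemma norm_sub_lt_of_floor_div_eq {w w' : ℂ} {t : ℝ} (ht : 0 < t)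
    (hre : ⌊w.re / t⌋ = ⌊w'.re / t⌋) (him : ⌊w.im / t⌋ = ⌊w'.im / t⌋) : ‖w - w'‖ < 2 * t := by
  have key : ∀ a b : ℝ, ⌊a / t⌋ = ⌊b / t⌋ → |a - b| < t := fun a b h => by
    have := Int.abs_sub_lt_one_of_floor_eq_floor h
    rwa [← sub_div, abs_div, abs_of_pos ht, div_lt_one ht] at this
  calc ‖w - w'‖ ≤ |(w - w').re| + |(w - w').im| := Complex.norm_le_abs_re_add_abs_im _
    _ < t + t := by
        rw [Complex.sub_re, Complex.sub_im]
        exact add_lt_add (key _ _ hre) (key _ _ him)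
    _ = 2 * t := by ring

lemma card_closedBall_le_of_card_closedBall_le {ι : Type*} [Fintype ι] (x : ι → ℂ) {s N : ℝ}
    (hs : 0 < s) (hN0 : 0 ≤ N) (hN : ∀ j, (#{i | ‖x i - x j‖ ≤ s} : ℝ) ≤ N)
    (z : ℂ) {R : ℝ} (hR : 0 ≤ R) :
    (#{i | ‖x i - z‖ ≤ R} : ℝ) ≤ (4 * R / s + 2) ^ 2 * N := by
  set t := s / 2 with ht_def
  have ht : 0 < t := by positivity
  set S : Finset ι := {i | ‖x i - z‖ ≤ R}
  let cell : ι → ℤ × ℤ := fun i => (⌊(x i).re / t⌋, ⌊(x i).im / t⌋)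
  have hfiber : ∀ p ∈ S.image cell, (#{i ∈ S | cell i = p} : ℝ) ≤ N := by
    simp only [mem_image]
    rintro _ ⟨q, -, rfl⟩
    refine le_trans ?_ (hN q)
    refine mod_cast card_le_card fun i hi => ?_
    simp only [mem_filter, Prod.ext_iff, cell] at hi
    simpa [ht_def, mul_div_cancel₀] using (norm_sub_lt_of_floor_div_eq ht hi.2.1 hi.2.2).le
  have himage : S.image cell ⊆
      Icc ⌊(z.re - R) / t⌋ ⌊(z.re + R) / t⌋ ×ˢ Icc ⌊(z.im - R) / t⌋ ⌊(z.im + R) / t⌋ := by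
    simp only [subset_iff, mem_image]
    rintro _ ⟨i, hi, rfl⟩
    have hiz : ‖x i - z‖ ≤ R := (mem_filter.mp hi).2
    have hre := (abs_le.mp ((Complex.abs_re_le_norm _).trans hiz))
    have him := (abs_le.mp ((Complex.abs_im_le_norm _).trans hiz))
    simp only [Complex.sub_re, Complex.sub_im] at hre him
    simp only [mem_product, mem_Icc, cell]
    refine ⟨⟨?_, ?_⟩, ?_, ?_⟩ <;> exact Int.floor_mono (by gcongr; linarith)
  have hIcc : (#(S.image cell) : ℝ) ≤ (4 * R / s + 2) ^ 2 := by
    have h2R : 2 * R / t = 4 * R / s := by rw [ht_def]; field_simp; ring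
    calc (#(S.image cell) : ℝ) ≤ #(Icc ⌊(z.re - R) / t⌋ ⌊(z.re + R) / t⌋) *
          #(Icc ⌊(z.im - R) / t⌋ ⌊(z.im + R) / t⌋) :=
          mod_cast (card_le_card himage).trans_eq (card_product _ _)
      _ ≤ (2 * R / t + 2) * (2 * R / t + 2) := by
          gcongr <;> exact card_Icc_floor_div_le _ hR ht
      _ = (4 * R / s + 2) ^ 2 := by rw [h2R, sq]
  calc (#S : ℝ) = ∑ p ∈ S.image cell, (#{i ∈ S | cell i = p} : ℝ) :=
        mod_cast card_eq_sum_card_image cell S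
    _ ≤ #(S.image cell) * N := by simpa using sum_le_card_nsmul _ _ N hfiber
    _ ≤ (4 * R / s + 2) ^ 2 * N := by gcongr

lemma exists_nat_forall_norm_sub_le {ι : Type*} [Finite ι] (x : ι → ℂ) {δ : ℝ} (hδ : 0 < δ) :
    ∃ k : ℕ, ∀ i j, ‖x i - x j‖ ≤ k * δ / 2 := by
  obtain ⟨B, hB⟩ := (Set.finite_range fun p : ι × ι => ‖x p.1 - x p.2‖).bddAbove
  refine ⟨⌈2 * B / δ⌉₊, fun i j => (hB ⟨(i, j), rfl⟩).trans ?_⟩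
  have := Nat.le_ceil (2 * B / δ)
  rw [div_le_iff₀ hδ] at this
  linarith

lemma le_card_far_of_card_closedBall_le {ι : Type*} [Fintype ι] (x : ι → ℂ) {δ : ℝ}
    (hδ : 0 < δ) {m k : ℕ} (hm : m ≤ Fintype.card ι) (hk : 1 ≤ k)
    (hlight : ∀ j, (#({i | ‖x i - x j‖ ≤ k * δ / 2} : Finset ι) : ℝ) ≤ (Fintype.card ι - m) / 676)
    (z : ℂ) : m ≤ #({i | (k + 2) * δ < ‖x i - z‖} : Finset ι) := by
  have hk' : (1 : ℝ) ≤ k := mod_cast hk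
  have hN0 : (0 : ℝ) ≤ (Fintype.card ι - m) / 676 :=
    div_nonneg (sub_nonneg.mpr (mod_cast hm)) (by norm_num)
  have hball := card_closedBall_le_of_card_closedBall_le x (by positivity) hN0 hlight z
    (R := (k + 2) * δ) (by positivity)
  have hratio : 4 * ((k + 2) * δ) / (k * δ / 2) + 2 ≤ 26 := by
    rw [← le_sub_iff_add_le, div_le_iff₀ (by positivity)]
    nlinarith
  have h676 : (4 * ((k + 2) * δ) / (k * δ / 2) + 2) ^ 2 ≤ 676 := by
    nlinarith [(by positivity : 0 ≤ 4 * ((k + 2) * δ) / (k * δ / 2))]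
  have hsplit := card_filter_add_card_filter_not (s := univ) fun i => (k + 2) * δ < ‖x i - z‖
  simp only [not_lt, card_univ] at hsplit
  have hsplit' : (#({i | (k + 2) * δ < ‖x i - z‖} : Finset ι) : ℝ) +
      #({i | ‖x i - z‖ ≤ (k + 2) * δ} : Finset ι) = Fintype.card ι := mod_cast hsplit
  have : (m : ℝ) ≤ #({i | (k + 2) * δ < ‖x i - z‖} : Finset ι) := by
    nlinarith [mul_le_mul_of_nonneg_right h676 hN0]
  exact_mod_cast this

lemma exists_center_radius {ι : Type*} [Fintype ι] (x : ι → ℂ) {δ : ℝ} (hδ : 0 < δ) {m : ℕ}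
    (hfar : ∀ z, m < #({i | 2 * δ < ‖x i - z‖} : Finset ι)) :
    ∃ z : ℂ, ∃ a : ℝ, 0 ≤ a ∧
      ((Fintype.card ι : ℝ) - m) / 676 ≤ #({i | ‖x i - z‖ ≤ a} : Finset ι) ∧
      m ≤ #({i | 2 * a + δ < ‖x i - z‖} : Finset ι) := by
  classical
  have hm : m < Fintype.card ι := (hfar 0).trans_le (card_filter_le _ _)
  obtain ⟨j₀⟩ : Nonempty ι := Fintype.card_pos_iff.mp (by omega)
  have hheavy : ∃ k : ℕ, ∃ j, ((Fintype.card ι : ℝ) - m) / 676 ≤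
      #({i | ‖x i - x j‖ ≤ k * δ / 2} : Finset ι) := by
    obtain ⟨k, hk⟩ := exists_nat_forall_norm_sub_le x hδ
    refine ⟨k, j₀, ?_⟩
    rw [filter_true_of_mem fun i _ => hk i j₀, card_univ]
    linarith [(Nat.cast_nonneg m : (0 : ℝ) ≤ m)]
  obtain ⟨j, hj⟩ := Nat.find_spec hheavy
  set K := Nat.find hheavy
  refine ⟨x j, K * δ / 2, by positivity, hj, ?_⟩
  rw [show 2 * (K * δ / 2) + δ = (K + 1) * δ by ring]
  rcases le_or_gt K 1 with hK | hK
  · refine (hfar (x j)).le.trans (card_le_card fun i hi => ?_)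
    have : (K : ℝ) ≤ 1 := mod_cast hK
    simp only [mem_filter, mem_univ, true_and] at hi ⊢
    nlinarith
  · have hlight : ∀ j', (#({i | ‖x i - x j'‖ ≤ (K - 1 : ℕ) * δ / 2} : Finset ι) : ℝ) ≤
        ((Fintype.card ι : ℝ) - m) / 676 := fun j' =>
      (not_le.mp fun h => Nat.find_min hheavy (by omega : K - 1 < K) ⟨j', h⟩).le
    have hK' : ((K - 1 : ℕ) : ℝ) + 2 = K + 1 := by
      rw [Nat.cast_sub hK.le]
      ring
    simpa [hK'] using le_card_far_of_card_closedBall_le x hδ hm.le (by omega) hlight (x j)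

lemma mem_flatVecs_of_card_far_le {n m : ℕ} {ρ : ℝ} {u : EuclideanSpace ℂ (Fin n)}
    (hu : ‖u‖ = 1) (hρ : 0 ≤ ρ) (z : ℂ)
    (h : #({i | ρ / √n < ‖coords u i - z‖} : Finset (Fin n)) ≤ m) :
    u ∈ flatVecs n m ρ := by
  set ε := ρ / √n
  set far : Finset (Fin n) := {i | ε < ‖coords u i - z‖}
  let v : EuclideanSpace ℂ (Fin n) :=
    WithLp.toLp 2 fun i => if i ∈ far then coords u i - z else 0
  refine ⟨hu, v, ?_, z, ?_⟩
  · calc ({j | coords v j ≠ 0} : Set (Fin n)).ncard ≤ (far : Set (Fin n)).ncard := by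
          refine Set.ncard_le_ncard (fun j hj => ?_) far.finite_toSet
          by_contra hj'
          exact hj (if_neg hj')
      _ = #far := Set.ncard_coe_finset far
      _ ≤ m := h
  · have hcoord : ∀ i, ‖coords u i - coords v i - z‖ ^ 2 ≤ ε ^ 2 := by
      intro i
      by_cases hi : i ∈ far
      · simpa [v, coords, hi] using sq_nonneg ε
      · have : ‖coords u i - z‖ ≤ ε := by simpa [far] using hi
        simpa [v, coords, hi] using pow_le_pow_left₀ (norm_nonneg _) this 2
    rw [EuclideanSpace.norm_eq, Real.sqrt_le_left hρ]
    calc ∑ i, ‖(u - v - z • onesE n).ofLp i‖ ^ 2 ≤ ∑ _i : Fin n, ε ^ 2 :=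
          sum_le_sum fun i _ => by simpa [coords, onesE] using hcoord i
      _ ≤ ρ ^ 2 := by
          rcases n.eq_zero_or_pos with rfl | hn
          · simp [sq_nonneg]
          · have : (n : ℝ) ≠ 0 := by positivity
            simp [ε, div_pow, mul_div_cancel₀ _ this]

/-- **Existence of a large bimodal component** (Lemma 3.4): if `u` is a unit vector with
`u ∉ Flat(m, ρ)`, then there are disjoint sets `J₁, J₂` with `|J₁| ≥ m`, `|J₂| ≥ c(n-m)`,
whose coordinates are `ρ/(2√n)`-separated; moreover some `J₁' ⊆ J₁` with `|J₁'| ≥ cm` has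
all its `r`-averages `ρ/(4√n)`-separated from the `r`-averages over `J₂`. -/
theorem bimodal_component :
    ∃ c : ℝ, 0 < c ∧
      ∀ n m : ℕ, ∀ ρ : ℝ, 0 < ρ →
        ∀ u : EuclideanSpace ℂ (Fin n), ‖u‖ = 1 → u ∉ flatVecs n m ρ →
          ∃ J₁ J₂ : Finset (Fin n), Disjoint J₁ J₂ ∧
            m ≤ J₁.card ∧ c * ((n : ℝ) - m) ≤ J₂.card ∧
            (∀ j₁ ∈ J₁, ∀ j₂ ∈ J₂,
              ρ / (2 * Real.sqrt n) ≤ ‖coords u j₁ - coords u j₂‖) ∧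
            ∃ J₁' ⊆ J₁, c * m ≤ (J₁'.card : ℝ) ∧
              ∀ r : ℕ, 1 ≤ r → r ≤ min J₁'.card J₂.card →
                ∀ J₁'' ⊆ J₁', ∀ J₂'' ⊆ J₂, J₁''.card = r → J₂''.card = r →
                  ρ / (4 * Real.sqrt n) ≤
                    ‖((r : ℂ))⁻¹ * ∑ j ∈ J₁'', coords u j -
                      ((r : ℂ))⁻¹ * ∑ j ∈ J₂'', coords u j‖ := by
  refine ⟨1 / 676, by norm_num, fun n m ρ hρ u hu hflat => ?_⟩
  set x := coords u
  set δ := ρ / (2 * Real.sqrt n)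
  have hfar : ∀ z, m < #({i | 2 * δ < ‖x i - z‖} : Finset (Fin n)) := fun z => by
    rw [show 2 * δ = ρ / Real.sqrt n by ring]
    exact lt_of_not_ge fun h => hflat (mem_flatVecs_of_card_far_le hu hρ.le z h)
  have hn : 0 < n := by
    simpa using (Nat.zero_le m).trans_lt ((hfar 0).trans_le (card_filter_le _ _))
  have hδ : 0 < δ := by positivity
  obtain ⟨z, a, ha, hJ₂, hJ₁⟩ := exists_center_radius x hδ hfar
  set J₁ : Finset (Fin n) := {i | 2 * a + δ < ‖x i - z‖}
  set J₂ : Finset (Fin n) := {i | ‖x i - z‖ ≤ a}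
  obtain ⟨e, he, hJ₁'⟩ := exists_norm_eq_one_card_le_card_sector (fun i => x i - z) J₁
  set J₁' := {i ∈ J₁ | ‖x i - z‖ / 2 ≤ (conj e * (x i - z)).re}
  refine ⟨J₁, J₂, disjoint_filter.mpr fun i _ h₁ h₂ => by linarith, hJ₁, ?_,
    fun j₁ hj₁ j₂ hj₂ => ?_, J₁', filter_subset _ _, ?_, fun r hr _ A hA B hB hAr hBr => ?_⟩
  · simpa [div_eq_inv_mul] using hJ₂
  · rw [mem_filter] at hj₁ hj₂
    linarith [norm_sub_le_norm_sub_add_norm_sub (x j₁) (x j₂) z, hj₁.2, hj₂.2]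
  · have : (m : ℝ) ≤ #J₁ := mod_cast hJ₁
    linarith
  · rw [show ρ / (4 * Real.sqrt n) = δ / 2 by ring]
    refine half_le_norm_avg_sub_avg_of_sector x z he hr hAr hBr (fun i hi => ?_)
      fun i hi => (mem_filter.mp (hB hi)).2
    exact ⟨(mem_filter.mp (filter_subset _ _ (hA hi))).2, (mem_filter.mp (hA hi)).2⟩
end
end

section
/- (Tensorization of anti-concentration, Lemma 4.2.) Let ε₀ > 0 and p₀ ∈ (0,1). There exist c₁, p₁ ∈ (0,1) depending only on p₀ such that: if ζ₁,…,ζ_n are independent non-negative real random variables with P(ζ_j ≤ ε₀) ≤ p₀ for every j ∈ [n], then P( Σ_{j=1}^n ζ_j² ≤ c₁ ε₀² n ) ≤ p₁ⁿ. -/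
/-!
Chernoff bound for the lower tail at `t = -1/ε₀²`. Pointwise, `exp (-ζ²/ε₀²)` is at most `1` on
`{ζ ≤ ε₀}` and at most `e⁻¹` off it, so each factor `E exp (-ζ_j²/ε₀²)` is at most
`r = e⁻¹ + (1 - e⁻¹) p₀ < 1`. Independence multiplies the factors and Markov's inequality gives
`P(∑ ζ_j² ≤ c ε₀² n) ≤ (e^c r)ⁿ`; with `c₁ = -log r / 2 ∈ (0, 1/2)` this is `p₁ⁿ` for
`p₁ = √r = exp (log r / 2)`.
-/

open MeasureTheory ProbabilityTheory Real
open scoped ENNReal BigOperators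

lemma exp_neg_inv_sq_mul_sq_le {ε x : ℝ} (hε : 0 < ε) :
    exp (-(ε ^ 2)⁻¹ * x ^ 2) ≤ exp (-1) + (1 - exp (-1)) * Set.indicator (Set.Iic ε) 1 x := by
  by_cases hx : x ≤ ε
  · have : exp (-(ε ^ 2)⁻¹ * x ^ 2) ≤ 1 :=
      exp_le_one_iff.mpr (mul_nonpos_of_nonpos_of_nonneg (by simp; positivity) (sq_nonneg x))
    rw [Set.indicator_of_mem (Set.mem_Iic.mpr hx), Pi.one_apply]
    linarith
  · have hsq : ε ^ 2 ≤ x ^ 2 := pow_le_pow_left₀ hε.le (not_le.mp hx).le 2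
    have : -(ε ^ 2)⁻¹ * x ^ 2 ≤ -1 := by
      rw [neg_mul, neg_le_neg_iff, inv_mul_eq_div, one_le_div (by positivity)]
      exact hsq
    simpa [Set.indicator_of_notMem (show x ∉ Set.Iic ε from hx)] using this

namespace ProbabilityTheory

variable {Ω : Type*} {mΩ : MeasurableSpace Ω} {μ : Measure Ω}

lemma integrable_exp_mul_of_nonpos_of_nonneg [IsFiniteMeasure μ] {X : Ω → ℝ}
    (hX : AEMeasurable X μ) (hX0 : ∀ ω, 0 ≤ X ω) {t : ℝ} (ht : t ≤ 0) :
    Integrable (fun ω ↦ exp (t * X ω)) μ :=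
  .of_mem_Icc 0 1 (measurable_exp.comp_aemeasurable (hX.const_mul t)) <| ae_of_all _ fun ω ↦
    ⟨(exp_pos _).le, exp_le_one_iff.mpr (mul_nonpos_of_nonpos_of_nonneg ht (hX0 ω))⟩

lemma mgf_sq_le [IsProbabilityMeasure μ] {ζ : Ω → ℝ} (hζ : Measurable ζ) {ε : ℝ} (hε : 0 < ε) :
    mgf (fun ω ↦ ζ ω ^ 2) μ (-(ε ^ 2)⁻¹) ≤
      exp (-1) + (1 - exp (-1)) * μ.real {ω | ζ ω ≤ ε} := by
  have hA : MeasurableSet {ω | ζ ω ≤ ε} := hζ measurableSet_Iic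
  have hind : Integrable (Set.indicator {ω | ζ ω ≤ ε} (1 : Ω → ℝ)) μ :=
    (integrable_const 1).indicator hA
  calc mgf (fun ω ↦ ζ ω ^ 2) μ (-(ε ^ 2)⁻¹)
      ≤ ∫ ω, exp (-1) + (1 - exp (-1)) * Set.indicator {ω | ζ ω ≤ ε} 1 ω ∂μ := by
        refine integral_mono (integrable_exp_mul_of_nonpos_of_nonneg (hζ.pow_const 2).aemeasurable
          (fun ω ↦ sq_nonneg _) (by simp; positivity)) ((integrable_const _).add (hind.const_mul _))
          fun ω ↦ ?_
        simpa [Set.indicator, Set.mem_Iic] using exp_neg_inv_sq_mul_sq_le (x := ζ ω) hε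
    _ = exp (-1) + (1 - exp (-1)) * μ.real {ω | ζ ω ≤ ε} := by
        rw [integral_add (integrable_const _) (hind.const_mul _), integral_const_mul,
          integral_indicator_one hA]
        simp

lemma iIndepFun.measure_sum_le_le_exp_mul_pow {ι : Type*} [Fintype ι] {X : ι → Ω → ℝ}
    (hindep : iIndepFun X μ) (hX : ∀ i, Measurable (X i)) {t : ℝ} (ht : t ≤ 0)
    (hint : ∀ i, Integrable (fun ω ↦ exp (t * X i ω)) μ) {r : ℝ}
    (hr : ∀ i, mgf (X i) μ t ≤ r) (a : ℝ) :
    μ.real {ω | ∑ i, X i ω ≤ a} ≤ exp (-t * a) * r ^ Fintype.card ι := by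
  have := hindep.isProbabilityMeasure
  have hchernoff := measure_le_le_exp_mul_mgf (X := ∑ i, X i) a ht
    (hindep.integrable_exp_mul_sum hX fun i _ ↦ hint i)
  rw [hindep.mgf_sum hX] at hchernoff
  simp only [Finset.sum_apply] at hchernoff
  calc _ ≤ _ := hchernoff
    _ ≤ exp (-t * a) * ∏ _i : ι, r := by
        gcongr with i
        exacts [fun i _ ↦ mgf_nonneg, hr i]
    _ = _ := by rw [Finset.prod_const, Finset.card_univ]

lemma iIndepFun.measure_sum_sq_le_le {ι : Type*} [Fintype ι] {ζ : ι → Ω → ℝ}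
    (hindep : iIndepFun ζ μ) (hζ : ∀ i, Measurable (ζ i)) {ε p : ℝ} (hε : 0 < ε)
    (hp : ∀ i, μ.real {ω | ζ i ω ≤ ε} ≤ p) (c : ℝ) :
    μ.real {ω | ∑ i, ζ i ω ^ 2 ≤ c * ε ^ 2 * Fintype.card ι} ≤
      (exp c * (exp (-1) + (1 - exp (-1)) * p)) ^ Fintype.card ι := by
  have := hindep.isProbabilityMeasure
  have hsq : iIndepFun (fun i ω ↦ ζ i ω ^ 2) μ :=
    hindep.comp (fun _ x ↦ x ^ 2) fun _ ↦ measurable_id.pow_const 2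
  have ht : -(ε ^ 2)⁻¹ ≤ 0 := by simp; positivity
  have hmgf (i : ι) : mgf (fun ω ↦ ζ i ω ^ 2) μ (-(ε ^ 2)⁻¹) ≤ exp (-1) + (1 - exp (-1)) * p := by
    refine (mgf_sq_le (hζ i) hε).trans ?_
    gcongr
    · linarith [exp_le_one_iff.mpr (show (-1 : ℝ) ≤ 0 by norm_num)]
    · exact hp i
  calc _ ≤ exp (-(-(ε ^ 2)⁻¹) * (c * ε ^ 2 * Fintype.card ι)) *
        (exp (-1) + (1 - exp (-1)) * p) ^ Fintype.card ι :=
        hsq.measure_sum_le_le_exp_mul_pow (fun i ↦ (hζ i).pow_const 2) ht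
          (fun i ↦ integrable_exp_mul_of_nonpos_of_nonneg ((hζ i).pow_const 2).aemeasurable
            (fun ω ↦ sq_nonneg _) ht) hmgf _
    _ = _ := by
        rw [mul_pow, ← exp_nat_mul]
        congr 2
        field_simp

end ProbabilityTheory

/-- **Tensorization of anti-concentration** (Lemma 4.2): if `ζ₁, …, ζ_n` are independent
non-negative random variables with `P(ζ_j ≤ ε₀) ≤ p₀` for every `j`, then
`P(Σ_j ζ_j² ≤ c₁ ε₀² n) ≤ p₁ⁿ`, where `c₁, p₁ ∈ (0,1)` depend only on `p₀`. -/
theorem tensorization_anticoncentration (ε₀ : ℝ) (hε₀ : 0 < ε₀) (p₀ : ℝ)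
    (hp₀ : p₀ ∈ Set.Ioo (0 : ℝ) 1) :
    ∃ c₁ p₁ : ℝ, c₁ ∈ Set.Ioo (0 : ℝ) 1 ∧ p₁ ∈ Set.Ioo (0 : ℝ) 1 ∧
      ∀ (n : ℕ) (Ω : Type) (_ : MeasurableSpace Ω) (μ : Measure Ω),
        IsProbabilityMeasure μ →
        ∀ ζ : Fin n → Ω → ℝ,
          (∀ j, Measurable (ζ j)) →
          (∀ j ω, 0 ≤ ζ j ω) →
          iIndepFun ζ μ →
          (∀ j, μ {ω | ζ j ω ≤ ε₀} ≤ ENNReal.ofReal p₀) →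
          μ {ω | ∑ j, (ζ j ω) ^ 2 ≤ c₁ * ε₀ ^ 2 * n} ≤ ENNReal.ofReal (p₁ ^ n) := by
  obtain ⟨hp₀_pos, hp₀_lt_one⟩ := hp₀
  set r := exp (-1) + (1 - exp (-1)) * p₀
  have hexp : exp (-1) < 1 := exp_lt_one_iff.mpr (by norm_num)
  have hr_gt : exp (-1) < r := by nlinarith
  have hr_lt : r < 1 := by nlinarith
  have hr_pos : 0 < r := (exp_pos _).trans hr_gt
  have hlog_gt : -1 < log r := by rwa [lt_log_iff_exp_lt hr_pos]
  have hlog_lt : log r < 0 := log_neg hr_pos hr_lt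
  have hp₁ : exp (-log r / 2) * r = exp (log r / 2) := by
    calc exp (-log r / 2) * r = exp (-log r / 2) * exp (log r) := by rw [exp_log hr_pos]
      _ = exp (log r / 2) := by rw [← exp_add]; ring_nf
  refine ⟨-log r / 2, exp (log r / 2), ⟨by linarith, by linarith⟩,
    ⟨exp_pos _, exp_lt_one_iff.mpr (by linarith)⟩, ?_⟩
  intro n Ω _ μ _ ζ hζ _ hindep hsmall
  have hp (j : Fin n) : μ.real {ω | ζ j ω ≤ ε₀} ≤ p₀ :=
    ENNReal.toReal_le_of_le_ofReal hp₀_pos.le (hsmall j)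
  have hbound := hindep.measure_sum_sq_le_le hζ hε₀ hp (-log r / 2)
  rw [Fintype.card_fin, hp₁] at hbound
  rw [← ENNReal.ofReal_toReal (measure_ne_top μ _)]
  exact ENNReal.ofReal_le_ofReal hbound
end

section
/- (Concentration for Hoeffding-type statistics of a random injection, Lemma 5.4.) Let S, T be finite sets with m = |S| ≤ |T|, let σ : S → T be a uniform random injection, let (T_i)_{i∈S} be fixed subsets of T, and set N_σ = #{i ∈ S : σ(i) ∈ T_i}. Then E N_σ = (1/|T|) Σ_{i∈S} |T_i|, and for every δ > 0, P( |N_σ − E N_σ| ≥ δ E N_σ ) ≤ 2 exp( −(δ²/(4+2δ)) · E N_σ ). In particular, if T₀ ⊆ T is fixed and U ⊆ T is a uniform random subset of size m, then for every δ > 0, P( | |U ∩ T₀| − m|T₀|/|T| | ≥ δ · m|T₀|/|T| ) ≤ 2 exp( −(δ²/(4+2δ)) · m|T₀|/|T| ). -/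
/-!
Chatterjee's exchangeable-pair argument. For an injection `σ`, a point `i ∈ S` and `t ∈ T`, the
map `σ ↦ (σ i, (t σ(i)) ∘ σ)` is a bijection from the injections onto
`T × {τ injective : τ i = t}`. Summing over `t ∈ T_i` and `i ∈ S` yields
`|T| · E[N_σ f(σ)] = Σ_i Σ_{t ∈ T_i} E[f((t σ(i)) ∘ σ)]` for every `f`. With `f = 1` this
is the mean. With `f = e^{λN}`, since a transposition changes `N` by at most `2`, the moment
generating function `m(λ) = E e^{λN}` satisfies `m' ≤ μ e^{2λ} m` for `λ ≥ 0` (and the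
reverse for `λ ≤ 0`). Hence `m(λ) ≤ exp (μ (e^{2λ} - 1) / 2)`, and Chernoff's bound at
`λ = log (1 + δ) / 2`, resp. `λ = -δ / 2`, gives the two tails. A uniform `m`-subset of `T`
is the image of a uniform injection, since every such subset is the image of exactly `m!`
injections; so the subset statement is the case `T_i = T₀`.
-/

open scoped BigOperators

noncomputable section

/-- The set of injections from `S` to `T`, as a finset. -/
def injFinset (S T : Type*) [Fintype S] [Fintype T] [DecidableEq S] [DecidableEq T] :
    Finset (S → T) :=
  Finset.univ.filter fun σ => Function.Injective σ

/-- `N_σ = #{i ∈ S : σ(i) ∈ T_i}`. -/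
def hitCount {S T : Type*} [Fintype S] [DecidableEq T] (Ti : S → Finset T) (σ : S → T) : ℕ :=
  (Finset.univ.filter fun i => σ i ∈ Ti i).card

open Finset Real

lemma Real.exp_neg_le_one_sub_add_sq_div_two {x : ℝ} (hx : 0 ≤ x) :
    exp (-x) ≤ 1 - x + x ^ 2 / 2 := by
  have hq : 0 < 1 + x + x ^ 2 / 2 := by positivity
  rw [exp_neg]
  calc (exp x)⁻¹ ≤ (1 + x + x ^ 2 / 2)⁻¹ := inv_anti₀ hq (quadratic_le_exp_of_nonneg hx)
    _ ≤ 1 - x + x ^ 2 / 2 := by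
      rw [inv_le_iff_one_le_mul₀ hq]
      nlinarith [sq_nonneg (x ^ 2)]

lemma Finset.card_filter_le_mul_exp_le_sum_exp {α : Type*} (s : Finset α) (f : α → ℝ)
    (c : ℝ) :
    (#{x ∈ s | c ≤ f x} : ℝ) * exp c ≤ ∑ x ∈ s, exp (f x) := by
  calc (#{x ∈ s | c ≤ f x} : ℝ) * exp c = #{x ∈ s | c ≤ f x} • exp c :=
        (nsmul_eq_mul _ _).symm
    _ ≤ ∑ x ∈ s with c ≤ f x, exp (f x) :=
      card_nsmul_le_sum _ _ _ fun x hx => exp_le_exp.2 (mem_filter.1 hx).2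
    _ ≤ ∑ x ∈ s, exp (f x) :=
      sum_le_sum_of_subset_of_nonneg (filter_subset _ _) fun _ _ _ => (exp_pos _).le

section Comparison

open Set

variable {m g m' g' : ℝ → ℝ}

lemma hasDerivAt_mul_exp_neg {x : ℝ} (hm : HasDerivAt m (m' x) x) (hg : HasDerivAt g (g' x) x) :
    HasDerivAt (fun y => m y * exp (-g y)) ((m' x - g' x * m x) * exp (-g x)) x :=
  (hm.mul hg.neg.exp).congr_deriv (by simp only [Pi.neg_apply]; ring)

lemma le_mul_exp_sub_of_hasDerivAt_le {a b : ℝ} (hab : a ≤ b)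
    (hm : ∀ x, HasDerivAt m (m' x) x) (hg : ∀ x, HasDerivAt g (g' x) x)
    (h : ∀ x ∈ Ioo a b, m' x ≤ g' x * m x) : m b ≤ m a * exp (g b - g a) := by
  have hG := fun x => hasDerivAt_mul_exp_neg (hm x) (hg x)
  have hanti : AntitoneOn (fun y => m y * exp (-g y)) (Icc a b) := by
    refine antitoneOn_of_deriv_nonpos (convex_Icc a b)
      (fun x _ => (hG x).continuousAt.continuousWithinAt)
      (fun x _ => (hG x).differentiableAt.differentiableWithinAt) fun x hx => ?_
    rw [interior_Icc] at hx
    rw [(hG x).deriv]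
    exact mul_nonpos_of_nonpos_of_nonneg (sub_nonpos.2 (h x hx)) (exp_pos _).le
  have key : m b * exp (-g b) ≤ m a * exp (-g a) :=
    hanti (left_mem_Icc.2 hab) (right_mem_Icc.2 hab) hab
  calc m b = m b * exp (-g b) * exp (g b) := by
        rw [mul_assoc, ← exp_add, neg_add_cancel, exp_zero, mul_one]
    _ ≤ m a * exp (-g a) * exp (g b) := mul_le_mul_of_nonneg_right key (exp_pos _).le
    _ = m a * exp (g b - g a) := by rw [mul_assoc, ← exp_add, neg_add_eq_sub]

lemma le_mul_exp_sub_of_le_hasDerivAt {a b : ℝ} (hab : a ≤ b)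
    (hm : ∀ x, HasDerivAt m (m' x) x) (hg : ∀ x, HasDerivAt g (g' x) x)
    (h : ∀ x ∈ Ioo a b, g' x * m x ≤ m' x) : m a ≤ m b * exp (g a - g b) := by
  have hneg {f f' : ℝ → ℝ} (hf : ∀ x, HasDerivAt f (f' x) x) (x : ℝ) :
      HasDerivAt (fun y => f (-y)) (-f' (-x)) x := by
    have := (hf (-x)).comp x (hasDerivAt_neg x)
    rwa [mul_neg_one] at this
  simpa using le_mul_exp_sub_of_hasDerivAt_le (neg_le_neg hab) (hneg hm) (hneg hg)
    fun x hx => by simpa using h (-x) ⟨lt_neg.1 hx.2, neg_lt.1 hx.1⟩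

end Comparison

def hitMean {S T : Type*} [Fintype S] [Fintype T] (Ti : S → Finset T) : ℝ :=
  (∑ i, ((Ti i).card : ℝ)) / Fintype.card T

lemma hitMean_nonneg {S T : Type*} [Fintype S] [Fintype T] (Ti : S → Finset T) :
    0 ≤ hitMean Ti := by
  unfold hitMean
  positivity

section HitCount

variable {S T : Type*} [Fintype S] [DecidableEq T]

lemma hitCount_mul_eq_sum (Ti : S → Finset T) (σ : S → T) (x : ℝ) :
    (hitCount Ti σ : ℝ) * x = ∑ i, ∑ t ∈ Ti i, if σ i = t then x else 0 := by
  simp only [sum_ite_eq, ← sum_filter, sum_const, nsmul_eq_mul, hitCount]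

lemma hitCount_swap_comp_le [DecidableEq S] (Ti : S → Finset T) {σ : S → T}
    (hσ : Function.Injective σ) (a b : T) :
    hitCount Ti (⇑(Equiv.swap a b) ∘ σ) ≤ hitCount Ti σ + 2 := by
  have hsub : ({i | (⇑(Equiv.swap a b) ∘ σ) i ∈ Ti i} : Finset S) ⊆
      ({i | σ i ∈ Ti i} : Finset S) ∪ ({i | σ i ∈ ({a, b} : Finset T)} : Finset S) := by
    intro i
    by_cases h : σ i = a ∨ σ i = b
    · simp [h]
    · simp_all [Equiv.swap_apply_of_ne_of_ne (not_or.1 h).1 (not_or.1 h).2]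
  have hab : #{i | σ i ∈ ({a, b} : Finset T)} ≤ 2 :=
    (card_le_card_of_injOn σ (fun i hi => (mem_filter.1 hi).2) hσ.injOn).trans card_le_two
  exact (card_le_card hsub).trans ((card_union_le _ _).trans (Nat.add_le_add_left hab _))

lemma hitCount_const_eq_card_image_inter {σ : S → T} (hσ : Function.Injective σ)
    (T₀ : Finset T) :
    hitCount (fun _ => T₀) σ = #(univ.image σ ∩ T₀) := by
  rw [← filter_mem_eq_inter, filter_image, card_image_of_injective _ hσ, hitCount]

end HitCount

section Injections

variable {S T : Type*} [Fintype S] [Fintype T] [DecidableEq S] [DecidableEq T]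

lemma mem_injFinset {σ : S → T} : σ ∈ injFinset S T ↔ Function.Injective σ := by
  simp [injFinset]

lemma swap_comp_mem_injFinset {σ : S → T} (hσ : σ ∈ injFinset S T) (a b : T) :
    ⇑(Equiv.swap a b) ∘ σ ∈ injFinset S T :=
  mem_injFinset.2 <| (Equiv.swap a b).injective.comp (mem_injFinset.1 hσ)

lemma sum_injFinset_swap_comp {M : Type*} [AddCommMonoid M] (i : S) (t : T)
    (f : (S → T) → M) :
    ∑ σ ∈ injFinset S T, f (⇑(Equiv.swap t (σ i)) ∘ σ) =
      Fintype.card T • ∑ σ ∈ injFinset S T with σ i = t, f σ := by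
  rw [← card_univ, ← sum_const, ← sum_product']
  refine sum_nbij' (fun σ => (σ i, ⇑(Equiv.swap t (σ i)) ∘ σ))
    (fun p => ⇑(Equiv.swap p.1 t) ∘ p.2) (fun σ hσ => ?_) (fun p hp => ?_) (fun σ _ => ?_)
    (fun p hp => ?_) fun _ _ => rfl
  · simpa using swap_comp_mem_injFinset hσ _ _
  · exact swap_comp_mem_injFinset (mem_filter.1 (mem_product.1 hp).2).1 _ _
  · ext x
    simp [Equiv.swap_comm t]
  · have hpt : p.2 i = t := (mem_filter.1 (mem_product.1 hp).2).2
    ext x <;> simp [hpt, Equiv.swap_comm t]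

lemma card_mul_sum_hitCount_mul (Ti : S → Finset T) (f : (S → T) → ℝ) :
    (Fintype.card T : ℝ) * ∑ σ ∈ injFinset S T, (hitCount Ti σ : ℝ) * f σ =
      ∑ i, ∑ t ∈ Ti i, ∑ σ ∈ injFinset S T, f (⇑(Equiv.swap t (σ i)) ∘ σ) := by
  simp_rw [hitCount_mul_eq_sum, sum_injFinset_swap_comp, nsmul_eq_mul, mul_sum, sum_filter,
    mul_ite, mul_zero]
  rw [sum_comm]
  exact sum_congr rfl fun i _ => sum_comm

lemma card_mul_sum_hitCount (Ti : S → Finset T) :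
    (Fintype.card T : ℝ) * ∑ σ ∈ injFinset S T, (hitCount Ti σ : ℝ) =
      (∑ i, ((Ti i).card : ℝ)) * (injFinset S T).card := by
  simpa [sum_mul] using card_mul_sum_hitCount_mul Ti fun _ => 1

lemma injFinset_nonempty (h : Fintype.card S ≤ Fintype.card T) : (injFinset S T).Nonempty :=
  let ⟨f⟩ := Function.Embedding.nonempty_of_card_le h
  ⟨f, mem_injFinset.2 f.injective⟩

lemma sum_hitCount_div_card_injFinset (Ti : S → Finset T)
    (h : Fintype.card S ≤ Fintype.card T) :
    (∑ σ ∈ injFinset S T, (hitCount Ti σ : ℝ)) / (injFinset S T).card = hitMean Ti := by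
  have hInj : (0 : ℝ) < (injFinset S T).card := by
    exact_mod_cast (injFinset_nonempty h).card_pos
  rcases (Fintype.card T).eq_zero_or_pos with hT | hT
  · have : IsEmpty S := Fintype.card_eq_zero_iff.1 (Nat.le_zero.1 (hT ▸ h))
    simp [hitMean, hitCount]
  · rw [hitMean, div_eq_div_iff hInj.ne' (by positivity), mul_comm, card_mul_sum_hitCount]

lemma sum_hitCount_mul_le_hitMean_mul {f : (S → T) → ℝ} {c : ℝ} (Ti : S → Finset T)
    (hT : 0 < Fintype.card T)
    (hf : ∀ σ ∈ injFinset S T, ∀ a b, f (⇑(Equiv.swap a b) ∘ σ) ≤ c * f σ) :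
    ∑ σ ∈ injFinset S T, (hitCount Ti σ : ℝ) * f σ ≤
      hitMean Ti * (c * ∑ σ ∈ injFinset S T, f σ) := by
  rw [hitMean, div_mul_eq_mul_div, le_div_iff₀ (by positivity), mul_comm,
    card_mul_sum_hitCount_mul, sum_mul]
  refine sum_le_sum fun i _ => ?_
  rw [← nsmul_eq_mul, ← sum_const, mul_sum]
  exact sum_le_sum fun t _ => sum_le_sum fun σ hσ => hf σ hσ _ _

lemma hitMean_mul_le_sum_hitCount_mul {f : (S → T) → ℝ} {c : ℝ} (Ti : S → Finset T)
    (hT : 0 < Fintype.card T)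
    (hf : ∀ σ ∈ injFinset S T, ∀ a b, c * f σ ≤ f (⇑(Equiv.swap a b) ∘ σ)) :
    hitMean Ti * (c * ∑ σ ∈ injFinset S T, f σ) ≤
      ∑ σ ∈ injFinset S T, (hitCount Ti σ : ℝ) * f σ := by
  have := sum_hitCount_mul_le_hitMean_mul (f := fun σ => -f σ) (c := c) Ti hT
    fun σ hσ a b => by linarith [hf σ hσ a b]
  simpa [sum_neg_distrib] using this

variable (Ti : S → Finset T)

def hitMgf (x : ℝ) : ℝ := ∑ σ ∈ injFinset S T, exp (x * hitCount Ti σ)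

lemma hasDerivAt_hitMgf (x : ℝ) :
    HasDerivAt (hitMgf Ti)
      (∑ σ ∈ injFinset S T, (hitCount Ti σ : ℝ) * exp (x * hitCount Ti σ)) x := by
  refine HasDerivAt.fun_sum fun σ _ => ?_
  simpa [mul_comm] using ((hasDerivAt_id x).mul_const (hitCount Ti σ : ℝ)).exp

lemma sum_hitCount_mul_exp_le (hT : 0 < Fintype.card T) {x : ℝ} (hx : 0 ≤ x) :
    ∑ σ ∈ injFinset S T, (hitCount Ti σ : ℝ) * exp (x * hitCount Ti σ) ≤
      hitMean Ti * exp (2 * x) * hitMgf Ti x := by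
  rw [mul_assoc]
  refine sum_hitCount_mul_le_hitMean_mul Ti hT fun σ hσ a b => ?_
  have hN : (hitCount Ti (⇑(Equiv.swap a b) ∘ σ) : ℝ) ≤ hitCount Ti σ + 2 := by
    exact_mod_cast hitCount_swap_comp_le Ti (mem_injFinset.1 hσ) a b
  rw [← exp_add]
  exact exp_le_exp.2 (by nlinarith)

lemma hitMean_mul_exp_le_sum_hitCount_mul_exp (hT : 0 < Fintype.card T) {x : ℝ} (hx : x ≤ 0) :
    hitMean Ti * exp (2 * x) * hitMgf Ti x ≤
      ∑ σ ∈ injFinset S T, (hitCount Ti σ : ℝ) * exp (x * hitCount Ti σ) := by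
  rw [mul_assoc]
  refine hitMean_mul_le_sum_hitCount_mul Ti hT fun σ hσ a b => ?_
  have hN : (hitCount Ti (⇑(Equiv.swap a b) ∘ σ) : ℝ) ≤ hitCount Ti σ + 2 := by
    exact_mod_cast hitCount_swap_comp_le Ti (mem_injFinset.1 hσ) a b
  rw [← exp_add]
  exact exp_le_exp.2 (by nlinarith)

lemma hitMgf_le (hT : 0 < Fintype.card T) (x : ℝ) :
    hitMgf Ti x ≤ (injFinset S T).card * exp (hitMean Ti * (exp (2 * x) - 1) / 2) := by
  set μ := hitMean Ti
  have hg (y : ℝ) : HasDerivAt (fun y => μ * exp (2 * y) / 2) (μ * exp (2 * y)) y :=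
    (((hasDerivAt_id y).const_mul 2).exp.const_mul μ |>.div_const 2).congr_deriv (by simp; ring)
  have hm := hasDerivAt_hitMgf Ti
  have h0 : hitMgf Ti 0 = (injFinset S T).card := by simp [hitMgf]
  rcases le_total 0 x with hx | hx
  · refine (le_mul_exp_sub_of_hasDerivAt_le hx hm hg fun y hy =>
      sum_hitCount_mul_exp_le Ti hT hy.1.le).trans_eq ?_
    rw [h0, mul_zero, exp_zero]
    ring_nf
  · refine (le_mul_exp_sub_of_le_hasDerivAt hx hm hg fun y hy =>
      hitMean_mul_exp_le_sum_hitCount_mul_exp Ti hT hy.2.le).trans_eq ?_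
    rw [h0, mul_zero, exp_zero]
    ring_nf

lemma card_filter_mul_le_mul_hitCount_le (hT : 0 < Fintype.card T) (x a : ℝ) :
    (#{σ ∈ injFinset S T | x * a ≤ x * hitCount Ti σ} : ℝ) ≤
      (injFinset S T).card * exp (hitMean Ti * (exp (2 * x) - 1) / 2 - x * a) := by
  have := (card_filter_le_mul_exp_le_sum_exp (injFinset S T) (fun σ => x * hitCount Ti σ)
    (x * a)).trans (hitMgf_le Ti hT x)
  rwa [sub_eq_add_neg, exp_add, ← mul_assoc, exp_neg, ← div_eq_mul_inv,
    le_div_iff₀ (exp_pos _)]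

lemma card_filter_mul_hitMean_le_hitCount_sub_le (hT : 0 < Fintype.card T) {δ : ℝ}
    (hδ : 0 ≤ δ) :
    (#{σ ∈ injFinset S T | δ * hitMean Ti ≤ hitCount Ti σ - hitMean Ti} : ℝ) ≤
      (injFinset S T).card * exp (-(δ ^ 2 / (4 + 2 * δ)) * hitMean Ti) := by
  set μ := hitMean Ti
  have hμ : 0 ≤ μ := hitMean_nonneg Ti
  set x := log (1 + δ) / 2
  have hx : 0 ≤ x := div_nonneg (log_nonneg (by linarith)) zero_le_two
  have hexp : exp (2 * x) = 1 + δ := by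
    rw [mul_div_cancel₀ _ two_ne_zero, exp_log (by linarith)]
  have hlog : 2 * δ / (δ + 2) / 2 * ((1 + δ) * μ) ≤ x * ((1 + δ) * μ) :=
    mul_le_mul_of_nonneg_right (div_le_div_of_nonneg_right (le_log_one_add_of_nonneg hδ)
      zero_le_two) (by positivity)
  calc (#{σ ∈ injFinset S T | δ * μ ≤ hitCount Ti σ - μ} : ℝ)
      ≤ #{σ ∈ injFinset S T | x * ((1 + δ) * μ) ≤ x * hitCount Ti σ} := by
        exact_mod_cast card_le_card <| monotone_filter_right _ fun σ _ hσ =>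
          mul_le_mul_of_nonneg_left (by linarith) hx
    _ ≤ (injFinset S T).card * exp (μ * (exp (2 * x) - 1) / 2 - x * ((1 + δ) * μ)) :=
        card_filter_mul_le_mul_hitCount_le Ti hT x _
    _ ≤ (injFinset S T).card * exp (-(δ ^ 2 / (4 + 2 * δ)) * μ) := by
        gcongr
        rw [hexp]
        calc μ * (1 + δ - 1) / 2 - x * ((1 + δ) * μ)
            ≤ μ * (1 + δ - 1) / 2 - 2 * δ / (δ + 2) / 2 * ((1 + δ) * μ) := by linarith
          _ = -(δ ^ 2 / (4 + 2 * δ)) * μ := by field_simp; ring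

lemma card_filter_mul_hitMean_le_hitMean_sub_le (hT : 0 < Fintype.card T) {δ : ℝ}
    (hδ : 0 ≤ δ) :
    (#{σ ∈ injFinset S T | δ * hitMean Ti ≤ hitMean Ti - hitCount Ti σ} : ℝ) ≤
      (injFinset S T).card * exp (-(δ ^ 2 / 4) * hitMean Ti) := by
  set μ := hitMean Ti
  have hμ : 0 ≤ μ := hitMean_nonneg Ti
  calc (#{σ ∈ injFinset S T | δ * μ ≤ μ - hitCount Ti σ} : ℝ)
      ≤ #{σ ∈ injFinset S T | -δ / 2 * ((1 - δ) * μ) ≤ -δ / 2 * hitCount Ti σ} := by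
        exact_mod_cast card_le_card <| monotone_filter_right _ fun σ _ hσ => by nlinarith
    _ ≤ (injFinset S T).card *
          exp (μ * (exp (2 * (-δ / 2)) - 1) / 2 - -δ / 2 * ((1 - δ) * μ)) :=
        card_filter_mul_le_mul_hitCount_le Ti hT _ _
    _ ≤ (injFinset S T).card * exp (-(δ ^ 2 / 4) * μ) := by
        gcongr
        rw [show 2 * (-δ / 2) = -δ by ring]
        nlinarith [mul_le_mul_of_nonneg_left (exp_neg_le_one_sub_add_sq_div_two hδ) hμ]

lemma card_filter_mul_hitMean_le_abs_sub_div_le {δ : ℝ} (hδ : 0 ≤ δ) :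
    (#{σ ∈ injFinset S T | δ * hitMean Ti ≤ |hitCount Ti σ - hitMean Ti|} : ℝ) /
        (injFinset S T).card ≤ 2 * exp (-(δ ^ 2 / (4 + 2 * δ)) * hitMean Ti) := by
  set μ := hitMean Ti
  have hInj : (0 : ℝ) ≤ (injFinset S T).card := Nat.cast_nonneg _
  refine div_le_of_le_mul₀ hInj (by positivity) ?_
  rcases (Fintype.card T).eq_zero_or_pos with hT | hT
  · have hμ : μ = 0 := by simp [μ, hitMean, hT]
    calc (#{σ ∈ injFinset S T | δ * μ ≤ |hitCount Ti σ - μ|} : ℝ)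
        ≤ (injFinset S T).card := by exact_mod_cast card_filter_le _ _
      _ ≤ 2 * exp (-(δ ^ 2 / (4 + 2 * δ)) * μ) * (injFinset S T).card := by
        rw [hμ, mul_zero, exp_zero]
        linarith
  have hsub : {σ ∈ injFinset S T | δ * μ ≤ |hitCount Ti σ - μ|} ⊆
      {σ ∈ injFinset S T | δ * μ ≤ hitCount Ti σ - μ} ∪
        {σ ∈ injFinset S T | δ * μ ≤ μ - hitCount Ti σ} := by
    rw [← filter_or]
    exact monotone_filter_right _ fun σ _ h => by
      rwa [← neg_sub (hitCount Ti σ : ℝ) μ, ← le_abs]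
  have hweaker : exp (-(δ ^ 2 / 4) * μ) ≤ exp (-(δ ^ 2 / (4 + 2 * δ)) * μ) :=
    exp_le_exp.2 <| mul_le_mul_of_nonneg_right (neg_le_neg <|
      div_le_div_of_nonneg_left (sq_nonneg δ) (by norm_num) (by linarith)) (hitMean_nonneg Ti)
  calc (#{σ ∈ injFinset S T | δ * μ ≤ |hitCount Ti σ - μ|} : ℝ)
      ≤ #{σ ∈ injFinset S T | δ * μ ≤ hitCount Ti σ - μ} +
          #{σ ∈ injFinset S T | δ * μ ≤ μ - hitCount Ti σ} := by
        exact_mod_cast (card_le_card hsub).trans (card_union_le _ _)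
    _ ≤ (injFinset S T).card * exp (-(δ ^ 2 / (4 + 2 * δ)) * μ) +
          (injFinset S T).card * exp (-(δ ^ 2 / 4) * μ) :=
        add_le_add (card_filter_mul_hitMean_le_hitCount_sub_le Ti hT hδ)
          (card_filter_mul_hitMean_le_hitMean_sub_le Ti hT hδ)
    _ ≤ 2 * exp (-(δ ^ 2 / (4 + 2 * δ)) * μ) * (injFinset S T).card := by
        nlinarith [mul_le_mul_of_nonneg_left hweaker hInj]

lemma card_filter_image_eq_factorial {U : Finset T} (hU : #U = Fintype.card S) :
    #{σ ∈ injFinset S T | univ.image σ = U} = (Fintype.card S).factorial := by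
  have hmem {σ : S → T} (hσ : σ ∈ {σ ∈ injFinset S T | univ.image σ = U}) (k : S) :
      σ k ∈ U := by
    obtain ⟨-, rfl⟩ := mem_filter.1 hσ
    exact mem_image_of_mem σ (mem_univ k)
  have hemb : Fintype.card (S ↪ U) = (Fintype.card S).factorial := by
    rw [Fintype.card_embedding_eq, Fintype.card_coe, hU, Nat.descFactorial_self]
  rw [← hemb, ← card_univ]
  refine card_bij' (fun σ hσ => ⟨fun k => ⟨σ k, hmem hσ k⟩, fun a b h =>
      mem_injFinset.1 (mem_filter.1 hσ).1 (congrArg Subtype.val h)⟩)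
    (fun e _ k => e k) (fun _ _ => mem_univ _) (fun e _ => ?_) (fun _ _ => rfl) fun _ _ => rfl
  have he : Function.Injective fun k => (e k : T) := Subtype.val_injective.comp e.injective
  refine mem_filter.2 ⟨mem_injFinset.2 he, eq_of_subset_of_card_le ?_ ?_⟩
  · exact image_subset_iff.2 fun k _ => (e k).2
  · rw [card_image_of_injective _ he, card_univ, hU]

lemma card_filter_injFinset_image (Q : Finset T → Prop) [DecidablePred Q] :
    #{σ ∈ injFinset S T | Q (univ.image σ)} =
      #{U : Finset T | #U = Fintype.card S ∧ Q U} * (Fintype.card S).factorial := by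
  rw [card_eq_sum_card_fiberwise (f := fun σ => univ.image σ)
    (t := {U : Finset T | #U = Fintype.card S ∧ Q U}), ← smul_eq_mul, ← sum_const]
  · refine sum_congr rfl fun U hU => ?_
    obtain ⟨hUcard, hQ⟩ := (mem_filter.1 hU).2
    rw [filter_filter, ← card_filter_image_eq_factorial hUcard]
    congr 1
    exact filter_congr fun σ _ => and_iff_right_of_imp fun h => h ▸ hQ
  · intro σ hσ
    obtain ⟨hσ, hQ⟩ := mem_filter.1 hσ
    simp [hQ, card_image_of_injective _ (mem_injFinset.1 hσ)]

lemma card_filter_card_eq_and_div_card_filter_card_eq (Q : Finset T → Prop) [DecidablePred Q] :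
    (#{U : Finset T | #U = Fintype.card S ∧ Q U} : ℝ) / #{U : Finset T | #U = Fintype.card S} =
      #{σ ∈ injFinset S T | Q (univ.image σ)} / #(injFinset S T) := by
  have hall := card_filter_injFinset_image (S := S) fun _ : Finset T => True
  simp only [and_true, filter_true] at hall
  rw [card_filter_injFinset_image, hall]
  push_cast
  rw [mul_div_mul_right _ _ (by positivity)]

end Injections

/-- **Concentration for Hoeffding-type statistics of a random injection** (Lemma 5.4):
for a uniform random injection `σ : S → T` and fixed sets `T_i ⊆ T`, the statistic
`N_σ = #{i : σ(i) ∈ T_i}` has mean `(1/|T|) Σ_i |T_i|` and Bernstein-type concentration;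
in particular, for a uniform random `m`-element subset `U ⊆ T` and fixed `T₀ ⊆ T`,
`|U ∩ T₀|` concentrates around `m|T₀|/|T|`.  (All probabilities are expressed as ratios of
cardinalities under the uniform distribution.) -/
theorem random_injection_concentration {S T : Type*} [Fintype S] [Fintype T]
    [DecidableEq S] [DecidableEq T]
    (hST : Fintype.card S ≤ Fintype.card T) (Ti : S → Finset T) (T₀ : Finset T) :
    -- the mean of `N_σ` under the uniform distribution on injections:
    ((∑ σ ∈ injFinset S T, (hitCount Ti σ : ℝ)) / (injFinset S T).card =
        (∑ i : S, ((Ti i).card : ℝ)) / Fintype.card T) ∧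
    -- Bernstein-type tail bound for `N_σ`:
    (∀ δ : ℝ, 0 < δ →
      (({σ ∈ (injFinset S T : Set (S → T)) |
          δ * ((∑ i : S, ((Ti i).card : ℝ)) / Fintype.card T) ≤
            |(hitCount Ti σ : ℝ) - (∑ i : S, ((Ti i).card : ℝ)) / Fintype.card T|} :
          Set (S → T)).ncard : ℝ) / (injFinset S T).card ≤
        2 * Real.exp (-(δ ^ 2 / (4 + 2 * δ)) *
          ((∑ i : S, ((Ti i).card : ℝ)) / Fintype.card T))) ∧
    -- the uniform random subset version:
    (∀ δ : ℝ, 0 < δ →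
      (({U : Finset T | U.card = Fintype.card S ∧
          δ * ((Fintype.card S : ℝ) * T₀.card / Fintype.card T) ≤
            |((U ∩ T₀).card : ℝ) - (Fintype.card S : ℝ) * T₀.card / Fintype.card T|} :
          Set (Finset T)).ncard : ℝ) /
          (({U : Finset T | U.card = Fintype.card S} : Set (Finset T)).ncard : ℝ) ≤
        2 * Real.exp (-(δ ^ 2 / (4 + 2 * δ)) *
          ((Fintype.card S : ℝ) * T₀.card / Fintype.card T))) := by
  refine ⟨sum_hitCount_div_card_injFinset Ti hST, fun δ hδ => ?_, fun δ hδ => ?_⟩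
  · have := card_filter_mul_hitMean_le_abs_sub_div_le Ti hδ.le
    rwa [← Set.ncard_coe_finset, coe_filter] at this
  · have hμ : (Fintype.card S : ℝ) * #T₀ / Fintype.card T = hitMean fun _ : S => T₀ := by
      simp [hitMean]
    rw [Set.ncard_eq_toFinset_card', Set.ncard_eq_toFinset_card', Set.toFinset_ofPred,
      Set.toFinset_ofPred, card_filter_card_eq_and_div_card_filter_card_eq, hμ]
    convert card_filter_mul_hitMean_le_abs_sub_div_le (fun _ => T₀) hδ.le using 4
    exact filter_congr fun σ hσ => by
      rw [hitCount_const_eq_card_image_inter (mem_injFinset.1 hσ)]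

end
end
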